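/- arXiv:2304.10956 — 9 statements merged into one kernel-verified Lean document; each statement's English description precedes it below -/
import Mathlib

section
/- Let P be a complete lattice. For every type S, every family f : S → P, every family of ultrafilters μ : T → Ultrafilter S, and every ultrafilter ν : Ultrafilter T, the canonical ultraproduct is laxly associative: ⨆ A ∈ (ν.bind μ), ⨅ s ∈ A, f s ≤ ⨆ B ∈ ν, ⨅ t ∈ B, (⨆ A ∈ μ t, ⨅ s ∈ A, f s). (Here Ultrafilter.bind ν μ is the ultrafilter on S with A ∈ ν.bind μ ↔ {t | A ∈ μ t} ∈ ν.) -/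
/- Each `A ∈ ν.bind μ` is witnessed on the right by `B = {t | A ∈ μ t} ∈ ν`:
for every `t ∈ B`, the set `A` itself occurs in the supremum over `μ t`. -/
/-- Lax associativity of the canonical ultraproduct in a complete lattice. -/
theorem canonical_ultraproduct_lax_assoc {P : Type*} [CompleteLattice P]
    {S T : Type*} (f : S → P) (μ : T → Ultrafilter S) (ν : Ultrafilter T) :
    ⨆ A ∈ ν.bind μ, ⨅ s ∈ A, f s ≤
      ⨆ B ∈ ν, ⨅ t ∈ B, ⨆ A ∈ μ t, ⨅ s ∈ A, f s := by
  refine iSup₂_le fun A (hA : {t | A ∈ μ t} ∈ ν) => ?_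
  calc ⨅ s ∈ A, f s
      ≤ ⨅ t ∈ {t | A ∈ μ t}, ⨆ A' ∈ μ t, ⨅ s ∈ A', f s :=
        le_iInf₂ fun _ ht => le_iSup₂_of_le A ht le_rfl
    _ ≤ ⨆ B ∈ ν, ⨅ t ∈ B, ⨆ A' ∈ μ t, ⨅ s ∈ A', f s :=
        le_iSup₂_of_le _ hA le_rfl
end

section
/- Let P and Q be complete lattices and φ : P → Q a monotone map. Then φ is a left ultrafunctor for the canonical ultrastructures, i.e. for every type S, every f : S → P, and every μ : Ultrafilter S one has φ (⨆ A ∈ μ, ⨅ s ∈ A, f s) ≤ ⨆ A ∈ μ, ⨅ s ∈ A, φ (f s), if and only if φ preserves suprema of nonempty directed sets, i.e. for every d : Set P with d nonempty and DirectedOn (· ≤ ·) d, φ (sSup d) = ⨆ x ∈ d, φ x. -/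
/-!
The canonical ultraproduct `⨆ A ∈ μ, ⨅ s ∈ A, f s` is `liminf f μ`, the supremum of the set of
elements eventually below `f`. That set is closed under binary joins, hence directed, so a
Scott-continuous `φ` commutes with its supremum and each `φ a` is eventually below `φ ∘ f`.
Conversely, a nonempty directed set `d` is the limit of the inclusion `d → P` along any ultrafilter
refining `atTop` on `d`, and the ultraproduct of `φ` along it is bounded by `⨆ x ∈ d, φ x`.
-/

universe u v

open Filter

theorem directedOn_setOf_eventually_le {α β : Type*} [SemilatticeSup α] (u : β → α)
    (F : Filter β) : DirectedOn (· ≤ ·) {a | ∀ᶠ n in F, a ≤ u n} := by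
  intro a ha b hb
  exact ⟨a ⊔ b, (ha.and hb).mono fun _ h => sup_le h.1 h.2, le_sup_left, le_sup_right⟩

theorem map_liminf_le_liminf_comp {α β γ : Type*} [CompleteLattice α] [CompleteLattice γ]
    {φ : α → γ} (hφ : Monotone φ)
    (hφd : ∀ d : Set α, d.Nonempty → DirectedOn (· ≤ ·) d → φ (sSup d) ≤ ⨆ x ∈ d, φ x)
    (u : β → α) (F : Filter β) : φ (liminf u F) ≤ liminf (φ ∘ u) F := by
  rw [liminf_eq]
  refine (hφd _ ⟨⊥, by simp⟩ (directedOn_setOf_eventually_le u F)).trans ?_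
  exact iSup₂_le fun a ha => le_liminf_of_le (h := ha.mono fun _ h => hφ h)

theorem DirectedOn.exists_ultrafilter_sSup_le_liminf {α : Type*} [CompleteLattice α]
    {d : Set α} (hdir : DirectedOn (· ≤ ·) d) (hd : d.Nonempty) :
    ∃ μ : Ultrafilter d, sSup d ≤ liminf ((↑) : d → α) μ := by
  have : Nonempty d := hd.to_subtype
  have : IsDirectedOrder d := hdir.isDirectedOrder
  obtain ⟨μ, hμ⟩ := Ultrafilter.exists_le (atTop : Filter d)
  exact ⟨μ, sSup_le fun x hx => le_liminf_of_le (h := hμ (eventually_ge_atTop (⟨x, hx⟩ : d)))⟩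

/-- A monotone map between complete lattices is a left ultrafunctor for the
canonical ultrastructures iff it preserves suprema of nonempty directed sets
(i.e. iff it is Scott-continuous). -/
theorem leftUltrafunctor_iff_scottContinuous {P : Type u} {Q : Type v}
    [CompleteLattice P] [CompleteLattice Q] (φ : P → Q) (hφ : Monotone φ) :
    (∀ (S : Type u) (f : S → P) (μ : Ultrafilter S),
        φ (⨆ A ∈ μ, ⨅ s ∈ A, f s) ≤ ⨆ A ∈ μ, ⨅ s ∈ A, φ (f s)) ↔
      (∀ d : Set P, d.Nonempty → DirectedOn (· ≤ ·) d →
        φ (sSup d) = ⨆ x ∈ d, φ x) := by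
  simp only [← Ultrafilter.mem_coe, ← liminf_eq_iSup_iInf]
  constructor
  · intro h d hd hdir
    refine le_antisymm ?_ (iSup₂_le fun x hx => hφ (le_sSup hx))
    obtain ⟨μ, hμ⟩ := hdir.exists_ultrafilter_sSup_le_liminf hd
    calc φ (sSup d) ≤ φ (liminf (↑) (μ : Filter d)) := hφ hμ
      _ ≤ liminf (fun x : d => φ x) (μ : Filter d) := h d _ μ
      _ ≤ ⨆ x : d, φ x := (liminf_le_limsup ..).trans limsup_le_iSup
      _ = ⨆ x ∈ d, φ x := iSup_subtype'' d φ
  · intro h S f μ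
    exact map_liminf_le_liminf_comp hφ (fun d hd hdir => (h d hd hdir).le) f μ
end

section
/- (Łoś ultraproduct theorem for propositional logic.) Let D be a distributive lattice with ⊤ and ⊥. Let S be a type, x : S → Order.Ideal D a family of ideals such that (x s).IsPrime for every s, and μ : Ultrafilter S. Then there exists a prime ideal J : Order.Ideal D with J.IsPrime such that for every p : D, p ∈ J ↔ {s | p ∈ x s} ∈ μ. -/
/-!
The ideal `J` is forced: `p ∈ J` iff `p` lies in `μ`-almost every `x s`. Each ideal axiom and
primality are closure properties that hold in every `x s`, and they pass to the limit because
`μ` is closed under finite intersections and supersets; properness uses that `⊤` lies in no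
`x s` and `∅ ∉ μ`, and primality uses that an ultrafilter containing a union contains one of
the two pieces.
-/

open Filter

namespace Order.Ideal

section FilterLim

variable {P S : Type*} [SemilatticeSup P] [OrderBot P] (l : Filter S) (x : S → Ideal P)

theorem isIdeal_setOf_eventually_mem : IsIdeal {p : P | ∀ᶠ s in l, p ∈ x s} where
  IsLowerSet _ _ hba ha := ha.mono fun s hs => (x s).lower hba hs
  Nonempty := ⟨⊥, Eventually.of_forall fun s => (x s).bot_mem⟩
  Directed _ hp _ hq :=
    ⟨_, (hp.and hq).mono fun s hs => (x s).sup_mem hs.1 hs.2, le_sup_left, le_sup_right⟩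

def filterLim : Ideal P := (isIdeal_setOf_eventually_mem l x).toIdeal

variable {l x}

@[simp]
theorem mem_filterLim {p : P} : p ∈ filterLim l x ↔ ∀ᶠ s in l, p ∈ x s := Iff.rfl

end FilterLim

variable {P S : Type*} [Lattice P] [BoundedOrder P] {x : S → Ideal P}

theorem isProper_filterLim {l : Filter S} [l.NeBot] (hx : ∀ᶠ s in l, (x s).IsProper) :
    (filterLim l x).IsProper :=
  isProper_of_notMem fun htop =>
    (mem_filterLim.mp htop).and hx |>.exists.elim fun _ hs => hs.2.top_notMem hs.1

theorem isPrime_filterLim {μ : Ultrafilter S} (hx : ∀ᶠ s in μ, (x s).IsPrime) :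
    (filterLim (μ : Filter S) x).IsPrime :=
  haveI := isProper_filterLim (hx.mono fun _ hs => hs.toIsProper)
  IsPrime.of_mem_or_mem fun hpq =>
    Ultrafilter.eventually_or.mp <| (mem_filterLim.mp hpq).and hx |>.mono fun _ hs =>
      hs.2.mem_or_mem hs.1

end Order.Ideal

/-- Łoś ultraproduct theorem for propositional logic: given a family of prime
ideals of a bounded distributive lattice and an ultrafilter on the index set,
there is a prime ideal whose membership is given by the ultrafilter. -/
theorem los_propositional {D : Type*} [DistribLattice D] [BoundedOrder D]
    {S : Type*} (x : S → Order.Ideal D) (hx : ∀ s, (x s).IsPrime)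
    (μ : Ultrafilter S) :
    ∃ J : Order.Ideal D, J.IsPrime ∧ ∀ p : D, p ∈ J ↔ {s | p ∈ x s} ∈ μ :=
  ⟨Order.Ideal.filterLim (μ : Filter S) x,
    Order.Ideal.isPrime_filterLim (Eventually.of_forall hx), fun _ => Order.Ideal.mem_filterLim⟩
end

section
/- Let P be a complete lattice. Then the canonically closed subsets of P form the closed sets of a topology: P itself and ∅ are canonically closed, the intersection of an arbitrary family of canonically closed subsets is canonically closed, and the union of two canonically closed subsets is canonically closed. -/
/-!
The canonical ultraproduct `⨆ A ∈ μ, ⨅ s ∈ A, f s` is the `liminf` of `f` along `μ`, so it only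
depends on the values of `f` on a set of the ultrafilter. Hence a canonically closed set `K`
contains the ultraproduct of any family that lies in `K` on a set of `μ`: redefine the family
outside that set by one of its values in `K`. For a union `K ∪ L`, the
ultrafilter contains either `{s | f s ∈ K}` or `{s | f s ∈ L}`.
-/

universe u v

/-- A subset of a complete lattice is canonically closed if it is closed under
canonical ultraproducts of families valued in it. -/
def CanonicallyClosed {P : Type u} [CompleteLattice P] (K : Set P) : Prop :=
  ∀ (S : Type u) (f : S → P), (∀ s, f s ∈ K) →
    ∀ μ : Ultrafilter S, (⨆ A ∈ μ, ⨅ s ∈ A, f s) ∈ K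

open Filter

section

variable {P : Type u} [CompleteLattice P]

namespace CanonicallyClosed

theorem iff_liminf_mem {K : Set P} :
    CanonicallyClosed K ↔
      ∀ (S : Type u) (f : S → P), (∀ s, f s ∈ K) → ∀ μ : Ultrafilter S, liminf f μ ∈ K := by
  simp only [CanonicallyClosed, liminf_eq_iSup_iInf, Ultrafilter.mem_coe]

theorem liminf_mem_of_eventually {K : Set P} (hK : CanonicallyClosed K) {S : Type u}
    {f : S → P} {μ : Ultrafilter S} (hf : ∀ᶠ s in μ, f s ∈ K) : liminf f μ ∈ K := by
  classical
  obtain ⟨s₀, hs₀⟩ := hf.exists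
  let g : S → P := fun s => if f s ∈ K then f s else f s₀
  have hgK : ∀ s, g s ∈ K := fun s => by
    by_cases h : f s ∈ K <;> simp [g, h, hs₀]
  have hfg : f =ᶠ[μ] g := hf.mono fun s hs => (if_pos hs).symm
  rw [liminf_congr hfg]
  exact iff_liminf_mem.1 hK S g hgK μ

theorem union {K L : Set P} (hK : CanonicallyClosed K) (hL : CanonicallyClosed L) :
    CanonicallyClosed (K ∪ L) := by
  refine iff_liminf_mem.2 fun S f hf μ => ?_
  rcases Ultrafilter.eventually_or.1 (Eventually.of_forall hf : ∀ᶠ s in μ, f s ∈ K ∨ f s ∈ L)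
    with hfK | hfL
  · exact Or.inl (hK.liminf_mem_of_eventually hfK)
  · exact Or.inr (hL.liminf_mem_of_eventually hfL)

end CanonicallyClosed

theorem canonicallyClosed_univ : CanonicallyClosed (Set.univ : Set P) :=
  fun _ _ _ _ => trivial

theorem canonicallyClosed_empty : CanonicallyClosed (∅ : Set P) :=
  fun _ _ hf μ => absurd (hf (μ.nonempty_of_mem univ_mem).some) (Set.notMem_empty _)

theorem canonicallyClosed_iInter {ι : Sort*} {K : ι → Set P}
    (hK : ∀ i, CanonicallyClosed (K i)) : CanonicallyClosed (⋂ i, K i) :=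
  fun S f hf μ => Set.mem_iInter.2 fun i => hK i S f (fun s => Set.mem_iInter.1 (hf s) i) μ

end

/-- The canonically closed subsets of a complete lattice form the closed sets
of a topology. -/
theorem canonicallyClosed_topology {P : Type u} [CompleteLattice P] :
    CanonicallyClosed (Set.univ : Set P) ∧
    CanonicallyClosed (∅ : Set P) ∧
    (∀ (ι : Type v) (K : ι → Set P), (∀ i, CanonicallyClosed (K i)) →
      CanonicallyClosed (⋂ i, K i)) ∧
    (∀ K L : Set P, CanonicallyClosed K → CanonicallyClosed L →
      CanonicallyClosed (K ∪ L)) :=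
  ⟨canonicallyClosed_univ, canonicallyClosed_empty, fun _ _ => canonicallyClosed_iInter,
    fun _ _ => .union⟩
end

section
/- Let P be a complete lattice and K : ι → Set P a family of canonically closed subsets of P with the finite intersection property: for every finite set t : Finset ι, the intersection ⋂ i ∈ t, K i is nonempty. Then the total intersection ⋂ i, K i is nonempty. (Compactness of the topology of canonically closed sets.) -/
/-!
Index an ultraproduct by the finite subfamilies: pick a point `f t` in the intersection of each
finite subfamily `t` and take the canonical ultraproduct along an ultrafilter finer than `atTop`.
For each `i`, almost every `t` contains `i`, so `f t ∈ K i` almost everywhere, and a canonically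
closed set also contains ultraproducts of families that lie in it only almost everywhere. Passing
to the family `Set.range K` moves the index type into the universe of `P`.
-/

universe u v

open Filter Set

section

variable {P : Type u} [CompleteLattice P]

def canonicalUltraproduct {S : Type*} (f : S → P) (μ : Ultrafilter S) : P :=
  ⨆ A ∈ μ, ⨅ s ∈ A, f s

theorem canonicalUltraproduct_mono {S : Type*} {f g : S → P} {μ : Ultrafilter S}
    (h : f ≤ᶠ[μ] g) : canonicalUltraproduct f μ ≤ canonicalUltraproduct g μ := by
  refine iSup₂_le fun A hA => ?_
  calc ⨅ s ∈ A, f s ≤ ⨅ s ∈ A ∩ {s | f s ≤ g s}, g s :=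
        le_iInf₂ fun s hs => (iInf₂_le s hs.1).trans hs.2
    _ ≤ canonicalUltraproduct g μ :=
        le_iSup₂ (f := fun B (_ : B ∈ μ) => ⨅ s ∈ B, g s) _ (μ.toFilter.inter_mem hA h)

theorem canonicalUltraproduct_congr {S : Type*} {f g : S → P} {μ : Ultrafilter S}
    (h : f =ᶠ[μ] g) : canonicalUltraproduct f μ = canonicalUltraproduct g μ :=
  le_antisymm (canonicalUltraproduct_mono h.le) (canonicalUltraproduct_mono h.symm.le)

namespace CanonicallyClosed

variable {K : Set P}

theorem canonicalUltraproduct_mem (hK : CanonicallyClosed K) {S : Type u} {f : S → P}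
    {μ : Ultrafilter S} (hf : ∀ᶠ s in μ, f s ∈ K) : canonicalUltraproduct f μ ∈ K := by
  classical
  obtain ⟨s₀, hs₀⟩ := hf.exists
  let g : S → P := fun s => if f s ∈ K then f s else f s₀
  have hgK : ∀ s, g s ∈ K := fun s => by
    dsimp only [g]
    split_ifs with hs
    exacts [hs, hs₀]
  have hfg : f =ᶠ[μ] g := hf.mono fun s hs => (if_pos hs).symm
  rw [canonicalUltraproduct_congr hfg]
  exact hK S g hgK μ

theorem iInter_nonempty {ι : Type u} {K : ι → Set P} (hK : ∀ i, CanonicallyClosed (K i))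
    (hfip : ∀ t : Finset ι, (⋂ i ∈ t, K i).Nonempty) : (⋂ i, K i).Nonempty := by
  choose f hf using hfip
  let μ : Ultrafilter (Finset ι) := .of atTop
  refine ⟨canonicalUltraproduct f μ, mem_iInter.2 fun i => (hK i).canonicalUltraproduct_mem ?_⟩
  have hi : ∀ᶠ t : Finset ι in atTop, {i} ≤ t := eventually_ge_atTop {i}
  exact Ultrafilter.of_le atTop <| hi.mono fun t ht =>
    mem_iInter₂.1 (hf t) i (Finset.singleton_subset_iff.1 ht)

end CanonicallyClosed

end

/-- Compactness: a family of canonically closed subsets with the finite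
intersection property has nonempty total intersection. -/
theorem canonicallyClosed_compact {P : Type u} [CompleteLattice P]
    {ι : Type v} (K : ι → Set P) (hK : ∀ i, CanonicallyClosed (K i))
    (hfip : ∀ t : Finset ι, (⋂ i ∈ t, K i).Nonempty) :
    (⋂ i, K i).Nonempty := by
  classical
  have hfip' : ∀ t : Finset (range K), (⋂ j ∈ t, (j : Set P)).Nonempty := fun t => by
    obtain ⟨x, hx⟩ := hfip (t.image (rangeSplitting K))
    refine ⟨x, mem_iInter₂.2 fun j hj => ?_⟩
    simpa only [apply_rangeSplitting] using
      mem_iInter₂.1 hx _ (Finset.mem_image_of_mem _ hj)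
  have hK' : ∀ j : range K, CanonicallyClosed (j : Set P) := by
    rintro ⟨_, i, rfl⟩
    exact hK i
  rw [← sInter_range, sInter_eq_iInter]
  exact CanonicallyClosed.iInter_nonempty hK' hfip'
end

section
/- Let P be a complete lattice and φ : P → Prop a monotone map (p ≤ q implies φ p → φ q). Then φ is a right ultrafunctor to the two-element ultraposet, i.e. for every type S, every f : S → P, and every μ : Ultrafilter S, {s | φ (f s)} ∈ μ implies φ (⨆ A ∈ μ, ⨅ s ∈ A, f s), if and only if the set {p | φ p} is canonically closed. -/
/-!
Restricting `μ` to the large set `{s | φ (f s)}` turns `f` into a family valued in `{p | φ p}`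
without changing its canonical ultraproduct, so canonical closedness yields the right
ultrafunctor property; the converse is the case where that set is everything.
-/

universe u

theorem Ultrafilter.iSup_iInf_comap {S T P : Type*} [CompleteLattice P] {m : T → S}
    (μ : Ultrafilter S) (inj : Function.Injective m) (large : Set.range m ∈ μ) (f : S → P) :
    (⨆ B ∈ μ.comap inj large, ⨅ t ∈ B, f (m t)) = ⨆ A ∈ μ, ⨅ s ∈ A, f s := by
  apply le_antisymm
  · refine iSup₂_le fun B hB => le_iSup₂_of_le (m '' B) ((μ.mem_comap inj large).1 hB) ?_
    exact le_iInf₂ fun _ ⟨t, ht, hts⟩ => hts ▸ iInf₂_le t ht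
  · refine iSup₂_le fun A hA => le_iSup₂_of_le (m ⁻¹' A) (Filter.preimage_mem_comap hA) ?_
    exact le_iInf₂ fun t ht => iInf₂_le (m t) ht

/-- A monotone map from a complete lattice to `Prop` is a right ultrafunctor to
the two-element ultraposet iff the preimage of `True` is canonically closed. -/
theorem rightUltrafunctor_to_two_iff {P : Type u} [CompleteLattice P]
    (φ : P → Prop) (hφ : ∀ p q : P, p ≤ q → φ p → φ q) :
    (∀ (S : Type u) (f : S → P) (μ : Ultrafilter S),
        {s | φ (f s)} ∈ μ → φ (⨆ A ∈ μ, ⨅ s ∈ A, f s)) ↔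
      CanonicallyClosed {p : P | φ p} := by
  constructor
  · intro h S f hf μ
    exact h S f μ (Filter.univ_mem' hf)
  · intro h S f μ hmem
    have large : Set.range (Subtype.val : {s // φ (f s)} → S) ∈ μ := by
      rwa [Subtype.range_coe_subtype]
    have hν := h _ (fun t => f t.1) (fun t => t.2) (μ.comap Subtype.val_injective large)
    exact hφ _ _ (μ.iSup_iInf_comap Subtype.val_injective large f).le hν
end

section
/- Let P and Q be complete lattices and φ : P → Q a monotone map that is a left ultrafunctor for the canonical ultrastructures: for every type S, every f : S → P, and every μ : Ultrafilter S, φ (⨆ A ∈ μ, ⨅ s ∈ A, f s) ≤ ⨆ A ∈ μ, ⨅ s ∈ A, φ (f s). If L ⊆ Q is canonically closed and is a lower set (IsLowerSet L), then φ ⁻¹' L is canonically closed and is a lower set in P. -/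
universe u

theorem CanonicallyClosed.preimage_of_isLowerSet {P Q : Type u} [CompleteLattice P]
    [CompleteLattice Q] {L : Set Q} (hL : CanonicallyClosed L) (hlow : IsLowerSet L)
    {φ : P → Q}
    (hleft : ∀ (S : Type u) (f : S → P) (μ : Ultrafilter S),
      φ (⨆ A ∈ μ, ⨅ s ∈ A, f s) ≤ ⨆ A ∈ μ, ⨅ s ∈ A, φ (f s)) :
    CanonicallyClosed (φ ⁻¹' L) :=
  fun S f hf μ => hlow (hleft S f μ) (hL S (φ ∘ f) hf μ)

/-- The preimage of a canonically closed lower set under a monotone left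
ultrafunctor between complete lattices is a canonically closed lower set. -/
theorem leftUltrafunctor_preimage_closed_lowerSet {P Q : Type u}
    [CompleteLattice P] [CompleteLattice Q] (φ : P → Q) (hmono : Monotone φ)
    (hleft : ∀ (S : Type u) (f : S → P) (μ : Ultrafilter S),
      φ (⨆ A ∈ μ, ⨅ s ∈ A, f s) ≤ ⨆ A ∈ μ, ⨅ s ∈ A, φ (f s))
    (L : Set Q) (hL : CanonicallyClosed L) (hlow : IsLowerSet L) :
    CanonicallyClosed (φ ⁻¹' L) ∧ IsLowerSet (φ ⁻¹' L) :=
  ⟨hL.preimage_of_isLowerSet hlow hleft, hlow.preimage hmono⟩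
end

section
/- Let P and Q be complete lattices and φ : P → Q a monotone map that is an ultrafunctor for the canonical ultrastructures: for every type S, every f : S → P, and every μ : Ultrafilter S, φ (⨆ A ∈ μ, ⨅ s ∈ A, f s) = ⨆ A ∈ μ, ⨅ s ∈ A, φ (f s). Then φ is closed and continuous for the topologies of canonically closed sets: (a) for every canonically closed L ⊆ Q, the preimage φ ⁻¹' L is canonically closed in P; (b) for every canonically closed K ⊆ P, the image φ '' K is canonically closed in Q. -/
universe u

section

variable {P Q : Type u} [CompleteLattice P] [CompleteLattice Q]

def IsUltrafunctor (φ : P → Q) : Prop :=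
  ∀ (S : Type u) (f : S → P) (μ : Ultrafilter S),
    φ (⨆ A ∈ μ, ⨅ s ∈ A, f s) = ⨆ A ∈ μ, ⨅ s ∈ A, φ (f s)

theorem CanonicallyClosed.preimage {φ : P → Q} (hφ : IsUltrafunctor φ) {L : Set Q}
    (hL : CanonicallyClosed L) : CanonicallyClosed (φ ⁻¹' L) := by
  intro S f hf μ
  change φ _ ∈ L
  rw [hφ S f μ]
  exact hL S (φ ∘ f) hf μ

theorem CanonicallyClosed.image {φ : P → Q} (hφ : IsUltrafunctor φ) {K : Set P}
    (hK : CanonicallyClosed K) : CanonicallyClosed (φ '' K) := by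
  intro S f hf μ
  choose g hgK hφg using hf
  refine ⟨⨆ A ∈ μ, ⨅ s ∈ A, g s, hK S g hgK μ, ?_⟩
  rw [hφ S g μ]
  simp only [hφg]

end

theorem ultrafunctor_closed_continuous_general {P Q : Type u}
    [CompleteLattice P] [CompleteLattice Q] (φ : P → Q)
    (hult : ∀ (S : Type u) (f : S → P) (μ : Ultrafilter S),
      φ (⨆ A ∈ μ, ⨅ s ∈ A, f s) = ⨆ A ∈ μ, ⨅ s ∈ A, φ (f s)) :
    (∀ L : Set Q, CanonicallyClosed L → CanonicallyClosed (φ ⁻¹' L)) ∧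
    (∀ K : Set P, CanonicallyClosed K → CanonicallyClosed (φ '' K)) :=
  ⟨fun _ hL => hL.preimage hult, fun _ hK => hK.image hult⟩

/-- A monotone ultrafunctor between complete lattices (with canonical
ultrastructures) is closed and continuous for the topologies of canonically
closed sets. -/
theorem ultrafunctor_closed_continuous {P Q : Type u}
    [CompleteLattice P] [CompleteLattice Q] (φ : P → Q) (hmono : Monotone φ)
    (hult : ∀ (S : Type u) (f : S → P) (μ : Ultrafilter S),
      φ (⨆ A ∈ μ, ⨅ s ∈ A, f s) = ⨆ A ∈ μ, ⨅ s ∈ A, φ (f s)) :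
    (∀ L : Set Q, CanonicallyClosed L → CanonicallyClosed (φ ⁻¹' L)) ∧
    (∀ K : Set P, CanonicallyClosed K → CanonicallyClosed (φ '' K)) :=
  ultrafunctor_closed_continuous_general φ hult
end

section
/- Let D be a distributive lattice with ⊤ and ⊥, and let K ⊆ Spec D be ultraproduct-closed and up-closed. If x ∈ Spec D does not lie in K, then there exists p ∈ D such that p ∈ y for every y ∈ K (i.e. K ⊆ B_p) and p ∉ x. -/
/-! Suppose every `p` lying in all members of `K` lies in `x`. Since `x` is prime, the meet of
finitely many elements outside `x` is outside `x`, hence outside some `y ∈ K`; so every finite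
subset `F` of the complement of `x` is avoided by some `y_F ∈ K`. The ultraproduct of the `y_F`
along an ultrafilter containing each `{F | p ∈ F}` is a member of `K` below `x`, and
up-closedness puts `x` itself in `K`. -/

universe u v

/-- The set of prime ideals of a bounded distributive lattice `D`. -/
def Spec (D : Type u) [DistribLattice D] [BoundedOrder D] : Set (Order.Ideal D) :=
  {x | x.IsPrime}

/-- `K` is ultraproduct-closed: whenever `f` is a family of ideals valued in
`K` and `J` is the ultraproduct of `f` along the ultrafilter `μ`
(characterised by `p ∈ J ↔ {s | p ∈ f s} ∈ μ`), then `J` belongs to `K`. -/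
def UltraClosed (D : Type u) [DistribLattice D] [BoundedOrder D]
    (K : Set (Order.Ideal D)) : Prop :=
  ∀ (S : Type u) (f : S → Order.Ideal D) (μ : Ultrafilter S) (J : Order.Ideal D),
    (∀ s, f s ∈ K) → (∀ p : D, p ∈ J ↔ {s | p ∈ f s} ∈ μ) → J ∈ K

/-- `K` is up-closed in `Spec D`. -/
def UpClosed (D : Type u) [DistribLattice D] [BoundedOrder D]
    (K : Set (Order.Ideal D)) : Prop :=
  ∀ x ∈ K, ∀ y ∈ Spec D, x ≤ y → y ∈ K

/-- `K` is down-closed in `Spec D`. -/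
def DownClosed (D : Type u) [DistribLattice D] [BoundedOrder D]
    (K : Set (Order.Ideal D)) : Prop :=
  ∀ x ∈ K, ∀ y ∈ Spec D, y ≤ x → y ∈ K

namespace Order.Ideal

theorem IsPrime.finset_inf_notMem {P ι : Type*} [Lattice P] [OrderTop P] {I : Ideal P}
    (hI : I.IsPrime) {s : Finset ι} {f : ι → P} (hs : ∀ i ∈ s, f i ∉ I) : s.inf f ∉ I := by
  classical
  induction s using Finset.induction_on with
  | empty => exact hI.top_notMem
  | insert i s _ ih =>
    rw [Finset.inf_insert]
    intro hmem
    rcases hI.mem_or_mem hmem with hi | hrest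
    · exact hs i (Finset.mem_insert_self i s) hi
    · exact ih (fun j hj => hs j (Finset.mem_insert_of_mem hj)) hrest

variable {P S : Type*} [SemilatticeSup P] [OrderBot P]

def ultraproduct (f : S → Ideal P) (μ : Ultrafilter S) : Ideal P where
  carrier := {p | ∀ᶠ s in μ, p ∈ f s}
  lower' _ _ hqp hp := hp.mono fun s => (f s).lower hqp
  nonempty' := ⟨⊥, .of_forall fun s => bot_mem (f s)⟩
  directed' _ hp _ hq :=
    ⟨_, (hp.and hq).mono fun _ hs => sup_mem hs.1 hs.2, le_sup_left, le_sup_right⟩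

@[simp]
theorem mem_ultraproduct {f : S → Ideal P} {μ : Ultrafilter S} {p : P} :
    p ∈ ultraproduct f μ ↔ {s | p ∈ f s} ∈ μ :=
  Iff.rfl

end Order.Ideal

open Order Ideal Filter

section

variable {D : Type u} [DistribLattice D] [BoundedOrder D] {K : Set (Ideal D)}

theorem UltraClosed.ultraproduct_mem (hcl : UltraClosed D K) {S : Type u} {f : S → Ideal D}
    (hf : ∀ s, f s ∈ K) (μ : Ultrafilter S) : ultraproduct f μ ∈ K :=
  hcl S f μ _ hf fun _ => mem_ultraproduct

theorem UltraClosed.exists_le_of_forall_finset (hcl : UltraClosed D K) (x : Ideal D)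
    (h : ∀ F : Finset {p // p ∉ x}, ∃ y ∈ K, ∀ p ∈ F, (p : D) ∉ y) : ∃ J ∈ K, J ≤ x := by
  choose g hgK hg using h
  let μ : Ultrafilter (Finset {p // p ∉ x}) := .of atTop
  refine ⟨ultraproduct g μ, hcl.ultraproduct_mem hgK μ, fun p hp => ?_⟩
  by_contra hpx
  have hpF : ∀ᶠ F in (μ : Filter (Finset {p // p ∉ x})), {(⟨p, hpx⟩ : {p // p ∉ x})} ≤ F :=
    Ultrafilter.of_le _ (eventually_ge_atTop _)
  obtain ⟨F, hpF, hpg⟩ := (hpF.and hp).exists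
  exact hg F _ (Finset.singleton_subset_iff.1 hpF) hpg

theorem exists_mem_forall_notMem_of_isPrime {x : Ideal D} (hx : x.IsPrime)
    (h : ∀ p : D, (∀ y ∈ K, p ∈ y) → p ∈ x) (F : Finset {p // p ∉ x}) :
    ∃ y ∈ K, ∀ p ∈ F, (p : D) ∉ y := by
  have hinf : F.inf Subtype.val ∉ x := hx.finset_inf_notMem fun p _ => p.2
  obtain ⟨y, hyK, hy⟩ : ∃ y ∈ K, F.inf Subtype.val ∉ y := by
    by_contra! hall
    exact hinf (h _ hall)
  exact ⟨y, hyK, fun p hp hpy => hy (y.lower (Finset.inf_le hp) hpy)⟩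

end

theorem separation_from_closed_upset_general {D : Type u} [DistribLattice D] [BoundedOrder D]
    (K : Set (Order.Ideal D))
    (hcl : UltraClosed D K) (hup : UpClosed D K)
    (x : Order.Ideal D) (hx : x ∈ Spec D) (hxK : x ∉ K) :
    ∃ p : D, (∀ y ∈ K, p ∈ y) ∧ p ∉ x := by
  by_contra! h
  obtain ⟨J, hJK, hJx⟩ :=
    hcl.exists_le_of_forall_finset x (exists_mem_forall_notMem_of_isPrime hx h)
  exact hxK (hup J hJK x hx hJx)

/-- Separation of a point of `Spec D` from an ultraproduct-closed up-closed
subset by a primitive set `B_p`. -/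
theorem separation_from_closed_upset {D : Type u} [DistribLattice D] [BoundedOrder D]
    (K : Set (Order.Ideal D)) (hKsub : K ⊆ Spec D)
    (hcl : UltraClosed D K) (hup : UpClosed D K)
    (x : Order.Ideal D) (hx : x ∈ Spec D) (hxK : x ∉ K) :
    ∃ p : D, (∀ y ∈ K, p ∈ y) ∧ p ∉ x :=
  separation_from_closed_upset_general K hcl hup x hx hxK
end
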